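/- For every k = (k₁, k₂) ∈ ℝ², define the unitary operator V_k = exp(i·ħ₀·B₀·k₁·k₂/2)·U₁(−ħ₀·k₁)∘U₂(−ħ₀·k₂) on L²(ℝ², ℂ). Then for every q = (q₁,q₂,q₃,q₄) ∈ ℝ⁴ the covariance identity V_k ∘ U(q) ∘ V_k⁻¹ = exp(i·(k₁·(B₀·q₂ − q₃) + k₂·(−B₀·q₁ − q₄)))·U(q) holds. -/
import Mathlib


open MeasureTheory Complex
open scoped ENNReal

noncomputable section

/-- The pointwise action of `U₁(t)` on functions on `ℝ²`. -/
def U1act (hb th B r s t : ℝ) (f : ℝ × ℝ → ℂ) : ℝ × ℝ → ℂ := fun p =>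
  Complex.exp (-Complex.I * B * (1 - r) * t * p.2 / (r * th * B - hb)) *
    f (p.1 + ((th * B * (r + s - r * s) - hb) / (r * th * B - hb)) * t, p.2)

/-- The pointwise action of `U₂(t)` on functions on `ℝ²`. -/
def U2act (hb th B r s t : ℝ) (f : ℝ × ℝ → ℂ) : ℝ × ℝ → ℂ := fun p =>
  Complex.exp (-Complex.I * r * B * t * p.1 / hb) *
    f (p.1, p.2 - ((r * th * B * (1 - s) - hb) / hb) * t)

/-- The pointwise action of `U₃(t)` on functions on `ℝ²`. -/
def U3act (hb th B r s t : ℝ) (f : ℝ × ℝ → ℂ) : ℝ × ℝ → ℂ := fun p =>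
  Complex.exp (Complex.I * t * p.1 / hb) * f (p.1, p.2 - s * (th / hb) * t)

/-- The pointwise action of `U₄(t)` on functions on `ℝ²`. -/
def U4act (hb th B r s t : ℝ) (f : ℝ × ℝ → ℂ) : ℝ × ℝ → ℂ := fun p =>
  Complex.exp (Complex.I * t * p.2 / hb) * f (p.1 + (1 - s) * (th / hb) * t, p.2)

/-- `U(q) = U₁(q₁) ∘ U₂(q₂) ∘ U₃(q₃) ∘ U₄(q₄)`. -/
def Uact (hb th B r s : ℝ) (q : Fin 4 → ℝ) (f : ℝ × ℝ → ℂ) : ℝ × ℝ → ℂ :=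
  U1act hb th B r s (q 0) (U2act hb th B r s (q 1) (U3act hb th B r s (q 2)
    (U4act hb th B r s (q 3) f)))

/-- `V_k = exp(i·ħ₀·B₀·k₁·k₂/2) · U₁(−ħ₀k₁) ∘ U₂(−ħ₀k₂)`. -/
def Vk (hb th B r s : ℝ) (k : ℝ × ℝ) (f : ℝ × ℝ → ℂ) : ℝ × ℝ → ℂ :=
  Complex.exp (Complex.I * hb * B * k.1 * k.2 / 2) •
    U1act hb th B r s (-hb * k.1) (U2act hb th B r s (-hb * k.2) f)

/-- The inverse of `V_k`: `V_k⁻¹ = exp(−i·ħ₀·B₀·k₁·k₂/2) · U₂(ħ₀k₂) ∘ U₁(ħ₀k₁)`. -/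
def VkInv (hb th B r s : ℝ) (k : ℝ × ℝ) (f : ℝ × ℝ → ℂ) : ℝ × ℝ → ℂ :=
  Complex.exp (-Complex.I * hb * B * k.1 * k.2 / 2) •
    U2act hb th B r s (hb * k.2) (U1act hb th B r s (hb * k.1) f)

set_option maxHeartbeats 1000000 in
theorem stmt9 (hb th B r s : ℝ) (hhb : hb ≠ 0) (hth : th ≠ 0) (hB : B ≠ 0)
    (hnd : hb - th * B ≠ 0) (hrs : r * th * B ≠ hb) (k : ℝ × ℝ) :
    -- `VkInv` is a two-sided inverse of the unitary operator `V_k`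
    (∀ f : ℝ × ℝ → ℂ, Vk hb th B r s k (VkInv hb th B r s k f) = f) ∧
    (∀ f : ℝ × ℝ → ℂ, VkInv hb th B r s k (Vk hb th B r s k f) = f) ∧
    -- the covariance identity `V_k ∘ U(q) ∘ V_k⁻¹ = exp(i(k₁(B q₂ − q₃) + k₂(−B q₁ − q₄))) U(q)`
    (∀ (q : Fin 4 → ℝ) (f : ℝ × ℝ → ℂ),
      Vk hb th B r s k (Uact hb th B r s q (VkInv hb th B r s k f)) =
        Complex.exp (Complex.I * (k.1 * (B * q 1 - q 2) + k.2 * (-B * q 0 - q 3))) •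
          Uact hb th B r s q f) := by

  have hrs' : r * th * B - hb ≠ 0 := sub_ne_zero.mpr hrs
  have hc1 : ((r : ℂ) * th * B - hb) ≠ 0 := by exact_mod_cast Complex.ofReal_ne_zero.mpr hrs'
  have hc2 : (hb : ℂ) ≠ 0 := Complex.ofReal_ne_zero.mpr hhb
  refine ⟨?_, ?_, ?_⟩
  · intro f
    funext p
    simp only [Vk, VkInv, Uact, U1act, U2act, U3act, U4act, Pi.smul_apply, smul_eq_mul,
      ← mul_assoc, ← Complex.exp_add]
    rw [show f p = Complex.exp 0 * f p by simp]
    congr 1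
    · congr 1
      push_cast
      ring
    · congr 2 <;> (push_cast; ring)
  · intro f
    funext p
    simp only [Vk, VkInv, Uact, U1act, U2act, U3act, U4act, Pi.smul_apply, smul_eq_mul,
      ← mul_assoc, ← Complex.exp_add]
    rw [show f p = Complex.exp 0 * f p by simp]
    congr 1
    · congr 1
      push_cast
      ring
    · congr 2 <;> (push_cast; ring)
  · intro q f
    funext p
    simp only [Vk, VkInv, Uact, U1act, U2act, U3act, U4act, Pi.smul_apply, smul_eq_mul,
      ← mul_assoc, ← Complex.exp_add]
    congr 1
    · congr 1
      push_cast
      ring_nf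
      have hc1' : (-(hb:ℂ) + B * r * th) ≠ 0 := by
        intro h; apply hc1; linear_combination h
      have hd : (-(hb:ℂ) + ↑B * ↑r * ↑th) * (-(hb:ℂ) + ↑B * ↑r * ↑th)⁻¹ = 1 :=
        mul_inv_cancel₀ hc1'
      have hv : (hb:ℂ) * (↑hb)⁻¹ = 1 := mul_inv_cancel₀ hc2
      linear_combination
        (Complex.I * ↑B * ↑k.1 * ↑(q 1) * ↑hb * (↑hb)⁻¹ -
          Complex.I * ↑k.1 * ↑(q 2) * ↑hb * (↑hb)⁻¹ -
          Complex.I * ↑B * ↑k.2 * ↑(q 0) * ↑hb * (↑hb)⁻¹) * hd +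
        (Complex.I * ↑B * ↑k.1 * ↑(q 1) - Complex.I * ↑k.1 * ↑(q 2) -
          Complex.I * ↑B * ↑k.2 * ↑(q 0) -
          Complex.I * ↑k.2 * ↑(q 3) * (↑hb * (↑hb)⁻¹ + 1)) * hv
    · congr 2 <;> (push_cast; ring)
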